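/- For every mean-payoff game G and every ultimately periodic path π = (s_0, a^0), (s_1, a^1), ..., if there exists a vector z ∈ ℝ^N with z_i ∈ pun_i(G) for every player i such that for every player i: (a) for all k ∈ ℕ, the pair (s_k, a^k) is z_i-secure for player i, and (b) z_i ≤ pay_i(π), then there exists a strategy profile σ that is a Nash equilibrium from s_0 with π = π(σ, s_0). -/

import Mathlib

/-! Framework: concurrent game arenas, mean-payoff games, finite-state strategies. -/

/-- A concurrent game arena over players `N`, actions `Ac` and states `St`:
an initial state and a transition function mapping a state together with a
joint action (one action per player) to a successor state. -/
structure Arena (N Ac St : Type) where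
  s0 : St
  tr : St → (N → Ac) → St

/-- A finite-state strategy (transducer) for a player: a finite nonempty set of internal
states `Q`, an initial internal state `q0`, a deterministic internal transition function
`δ` reading joint actions, and an action function `act`. -/
structure Strategy (N Ac : Type) where
  Q : Type
  [finQ : Fintype Q]
  q0 : Q
  δ : Q → (N → Ac) → Q
  act : Q → Ac

attribute [instance] Strategy.finQ

/-- A path in the arena `A` is an infinite sequence of configurations (state, joint action)
in which every successor state is obtained by applying the transition function. -/
def IsPath {N Ac St : Type} (A : Arena N Ac St) (π : ℕ → St × (N → Ac)) : Prop :=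
  ∀ k : ℕ, A.tr (π k).1 (π k).2 = (π (k + 1)).1

/-- A sequence is ultimately periodic if it is of the form `ρ · τ^ω` with `τ` nonempty;
equivalently, there are `K` and `T > 0` such that the sequence is `T`-periodic from `K` on. -/
def UltimatelyPeriodic {α : Type} (π : ℕ → α) : Prop :=
  ∃ K T : ℕ, 0 < T ∧ ∀ k : ℕ, K ≤ k → π (k + T) = π k

/-- The mean-payoff value of a path with respect to a weight function `w` on states:
the `liminf` of the averages of the weights along the state sequence of the path. -/
noncomputable def pay {N Ac St : Type} (w : St → ℤ) (π : ℕ → St × (N → Ac)) : ℝ :=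
  Filter.liminf (fun n : ℕ => (∑ j ∈ Finset.range n, (w (π j).1 : ℝ)) / n) Filter.atTop

/-- Auxiliary run of a strategy profile from state `s`: the current game state together
with the current internal state of each player's transducer. -/
def runAux {N Ac St : Type} (A : Arena N Ac St) (σ : ∀ _ : N, Strategy N Ac) (s : St) :
    ℕ → St × (∀ i : N, (σ i).Q)
  | 0 => (s, fun i => (σ i).q0)
  | k + 1 =>
      let p := runAux A σ s k
      let a : N → Ac := fun i => (σ i).act (p.2 i)
      (A.tr p.1 a, fun i => (σ i).δ (p.2 i) a)

/-- The unique path `π(σ, s)` induced by the strategy profile `σ` from state `s`: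
at each step every player plays the action of its current internal state. -/
def play {N Ac St : Type} (A : Arena N Ac St) (σ : ∀ _ : N, Strategy N Ac) (s : St)
    (k : ℕ) : St × (N → Ac) :=
  ((runAux A σ s k).1, fun i => (σ i).act ((runAux A σ s k).2 i))

/-- The strategy profile `σ` is a Nash equilibrium of the mean-payoff game with weights `w`
from state `s`: no player `i` can increase its payoff by unilaterally switching strategy. -/
def NashFrom {N Ac St : Type} [DecidableEq N] (A : Arena N Ac St) (w : N → St → ℤ)
    (σ : ∀ _ : N, Strategy N Ac) (s : St) : Prop :=
  ∀ (i : N) (σ' : Strategy N Ac),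
    pay (w i) (play A (Function.update σ i σ') s) ≤ pay (w i) (play A σ s)

/-- The punishment value `pun_i(s)`: the infimum over strategy profiles of the coalition
`N ∖ {i}` of the supremum over strategies of player `i` of the payoff of player `i`
from state `s`. -/
noncomputable def pun {N Ac St : Type} [DecidableEq N] (A : Arena N Ac St)
    (w : N → St → ℤ) (i : N) (s : St) : ℝ :=
  ⨅ σ : ∀ _ : N, Strategy N Ac, ⨆ σi : Strategy N Ac,
    pay (w i) (play A (Function.update σ i σi) s)

/-- A configuration `(s, a)` is `z`-secure for player `i` if every unilateral deviation
of `i` leads to a state whose punishment value for `i` is at most `z`. -/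
def ZSecure {N Ac St : Type} [DecidableEq N] (A : Arena N Ac St) (w : N → St → ℤ)
    (i : N) (z : ℝ) (p : St × (N → Ac)) : Prop :=
  ∀ a' : Ac, pun A w i (A.tr p.1 (Function.update p.2 i a')) ≤ z

/-!
The equilibrium is a grim-trigger profile: all players follow the lasso `π`, which a finite
counter can generate; at the first deviation, by player `i` into state `s`, the others switch to
a positional profile holding `i`'s mean payoff from `s` to at most `pun_i(s)`, and by security
`pun_i(s) ≤ z_i ≤ pay_i(π)`.

Such exact positional punishments exist. Fix a finite-memory coalition profile of value below
`c`. In the product of the arena with the coalition's memory, every reachable cycle has mean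
weight at most `c`, since looping on it is an ultimately periodic deviation, which a finite-state
strategy can play. Hence the largest excess `∑ (w - c)` of a finite run from a reachable
configuration is finite, and it is a potential that decreases by at least `w - c` per step.
Playing, at each state, the coalition's action from the configuration of least potential keeps
the excess bounded, so the mean payoff stays at most `c`. As there are finitely many positional
profiles, one of them works for all `c > pun_i(s)`, hence for `pun_i(s)` itself.
-/

open Filter Finset Function Topology

/-- `pay w ρ` unfolds to `liminfAvg fun k => w (ρ k).1`. -/
noncomputable def liminfAvg (u : ℕ → ℝ) : ℝ :=
  liminf (fun n : ℕ => (∑ k ∈ range n, u k) / n) atTop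

theorem liminfAvg_le_of_eventually_sum_le {u : ℕ → ℝ} {c C : ℝ} (hu : BddBelow (Set.range u))
    (h : ∀ᶠ n in atTop, ∑ k ∈ range n, u k ≤ n * c + C) : liminfAvg u ≤ c := by
  obtain ⟨L, hL⟩ := hu
  have hlim : Tendsto (fun n : ℕ => c + C / n) atTop (𝓝 c) := by
    simpa using tendsto_const_nhds.add
      (tendsto_const_nhds.div_atTop (tendsto_natCast_atTop_atTop (R := ℝ)))
  refine (liminf_le_liminf ?_ ?_ hlim.isBoundedUnder_le.isCoboundedUnder_ge).trans_eq
    hlim.liminf_eq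
  · filter_upwards [h, eventually_gt_atTop 0] with n hn hn0
    have hn0 : (0 : ℝ) < n := Nat.cast_pos.mpr hn0
    rw [div_le_iff₀ hn0, add_mul, div_mul_cancel₀ _ hn0.ne', mul_comm]
    exact hn
  · refine isBoundedUnder_of_eventually_ge (a := L) ?_
    filter_upwards [eventually_gt_atTop 0] with n hn0
    rw [le_div_iff₀ (Nat.cast_pos.mpr hn0)]
    simpa [mul_comm] using card_nsmul_le_sum (range n) u L fun k _ => hL ⟨k, rfl⟩

theorem liminfAvg_le_of_forall_le {u : ℕ → ℝ} {B : ℝ} (hu : BddBelow (Set.range u))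
    (hB : ∀ k, u k ≤ B) : liminfAvg u ≤ B :=
  liminfAvg_le_of_eventually_sum_le (C := 0) hu <| Eventually.of_forall fun n => by
    simpa [mul_comm] using sum_le_card_nsmul (range n) u B fun k _ => hB k

theorem UltimatelyPeriodic.exists_iterate_eq {α : Type} {f : ℕ → α} (hf : UltimatelyPeriodic f) :
    ∃ (M : Type) (_ : Fintype M) (m₀ : M) (next : M → M) (lab : M → α),
      ∀ n, f n = lab (next^[n] m₀) := by
  obtain ⟨K, T, hT, hper⟩ := hf
  have hshift : ∀ q r, K ≤ r → f (r + q * T) = f r := by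
    intro q r hr
    induction q with
    | zero => simp
    | succ q ih => rw [add_one_mul, ← add_assoc, hper _ (by omega), ih]
  let next : Fin (K + T) → Fin (K + T) := fun m =>
    if h : m.1 + 1 < K + T then ⟨m.1 + 1, h⟩ else ⟨K, by omega⟩
  let m₀ : Fin (K + T) := ⟨0, by omega⟩
  have hnext : ∀ m, (next m).1 = if m.1 + 1 < K + T then m.1 + 1 else K := by
    intro m; unfold next; split <;> rfl
  -- `next^[n] m₀` is the representative of `n` in `[0, K + T)` modulo `T` above `K`
  have hrep : ∀ n, ∃ q, n = (next^[n] m₀).1 + q * T ∧ (q = 0 ∨ K ≤ (next^[n] m₀).1) := by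
    intro n
    induction n with
    | zero => exact ⟨0, by simp [m₀]⟩
    | succ n ih =>
      obtain ⟨q, hq, hqK⟩ := ih
      have hlt := (next^[n] m₀).2
      rw [iterate_succ_apply', hnext]
      split_ifs with h
      · exact ⟨q, by omega, by omega⟩
      · exact ⟨q + 1, by rw [add_one_mul]; omega, Or.inr le_rfl⟩
  refine ⟨Fin (K + T), inferInstance, m₀, next, fun m => f m, fun n => ?_⟩
  obtain ⟨q, hq, hqK⟩ := hrep n
  calc f n = f ((next^[n] m₀).1 + q * T) := congrArg f hq
    _ = f (next^[n] m₀) := by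
      rcases hqK with rfl | hK
      · rw [zero_mul, add_zero]
      · exact hshift q _ hK

theorem UltimatelyPeriodic.finite_range {α : Type} {f : ℕ → α} (hf : UltimatelyPeriodic f) :
    (Set.range f).Finite := by
  obtain ⟨M, _, m₀, next, lab, hf⟩ := hf.exists_iterate_eq
  exact (Set.finite_range lab).subset (Set.range_subset_iff.mpr fun n => ⟨_, (hf n).symm⟩)

theorem tendsto_avg_of_periodic {u : ℕ → ℝ} {K T : ℕ} (hT : 0 < T)
    (hu : ∀ k, K ≤ k → u (k + T) = u k) :
    Tendsto (fun n : ℕ => (∑ k ∈ range n, u k) / n) atTop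
      (𝓝 ((∑ k ∈ Ico K (K + T), u k) / T)) := by
  set μ := (∑ k ∈ Ico K (K + T), u k) / T
  have hwindow : ∀ n, K ≤ n → ∑ k ∈ range T, u (n + k) = T * μ := by
    intro n hn
    induction n, hn using Nat.le_induction with
    | base =>
      rw [mul_div_cancel₀ _ (by positivity), sum_Ico_eq_sum_range, add_tsub_cancel_left]
    | succ n hn ih =>
      have h := sum_range_succ' (fun k => u (n + k)) T
      rw [sum_range_succ, add_zero, hu n hn] at h
      simp only [← add_assoc, add_right_comm n _ 1] at h
      linarith
  -- the deviation of the partial sums from `n * μ` is periodic, hence bounded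
  set S : ℕ → ℝ := fun n => ∑ k ∈ range n, u k - n * μ
  have hS : UltimatelyPeriodic S := by
    refine ⟨K, T, hT, fun n hn => ?_⟩
    simp only [S, sum_range_add, hwindow n hn, Nat.cast_add]
    ring
  obtain ⟨C, hC⟩ := (hS.finite_range.image abs).bddAbove
  have hS0 : Tendsto (fun n : ℕ => S n / n) atTop (𝓝 0) := by
    refine squeeze_zero_norm (a := fun n : ℕ => C / n) (fun n => ?_)
      (tendsto_const_nhds.div_atTop tendsto_natCast_atTop_atTop)
    rw [Real.norm_eq_abs, abs_div, Nat.abs_cast]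
    exact div_le_div_of_nonneg_right (hC ⟨S n, ⟨n, rfl⟩, rfl⟩) n.cast_nonneg
  refine (by simpa using hS0.const_add μ : Tendsto (fun n : ℕ => μ + S n / n) atTop _).congr' ?_
  filter_upwards [eventually_gt_atTop 0] with n hn
  have : (n : ℝ) ≠ 0 := by positivity
  simp only [S]
  field_simp
  ring

section Trajectory

variable {V : Type*} {X : Type} (step : V → X → V)

def trajectory (v : V) (xs : ℕ → X) : ℕ → V
  | 0 => v
  | n + 1 => step (trajectory v xs n) (xs n)

variable {step}

theorem trajectory_congr {v : V} {xs ys : ℕ → X} {n : ℕ} (h : ∀ k < n, xs k = ys k) :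
    trajectory step v xs n = trajectory step v ys n := by
  induction n with
  | zero => rfl
  | succ n ih =>
    rw [trajectory, trajectory, ih fun k hk => h k (by omega), h n (by omega)]

theorem trajectory_add (v : V) (xs : ℕ → X) (m n : ℕ) :
    trajectory step v xs (m + n) =
      trajectory step (trajectory step v xs m) (fun k => xs (m + k)) n := by
  induction n with
  | zero => rfl
  | succ n ih => rw [← add_assoc, trajectory, ih, trajectory]

theorem trajectory_succ' (v : V) (xs : ℕ → X) (n : ℕ) :
    trajectory step v xs (n + 1) = trajectory step (step v (xs 0)) (fun k => xs (k + 1)) n := by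
  rw [add_comm, trajectory_add]
  simp only [add_comm 1]
  rfl

theorem trajectory_eq_iterate (g : V → V) (v : V) (xs : ℕ → X) (n : ℕ) :
    trajectory (fun q _ => g q) v xs n = g^[n] v := by
  induction n with
  | zero => rfl
  | succ n ih => rw [trajectory, ih, iterate_succ_apply']

theorem sum_range_trajectory_eq_of_cycle (f : V → ℝ) {v : V} {xs : ℕ → X} {a b : ℕ}
    (hab : a ≤ b) (hcyc : trajectory step v xs a = trajectory step v xs b) (r : ℕ) :
    ∑ k ∈ range (b + r), f (trajectory step v xs k) =
      ∑ k ∈ range (a + r),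
          f (trajectory step v (fun k => if k < a then xs k else xs (k + (b - a))) k) +
        ∑ k ∈ Ico a b, f (trajectory step v xs k) := by
  set ys : ℕ → X := fun k => if k < a then xs k else xs (k + (b - a))
  have hpre : ∀ k ≤ a, trajectory step v ys k = trajectory step v xs k := fun k hk =>
    trajectory_congr fun j hj => if_pos (by omega)
  have hpost : ∀ k, trajectory step v ys (a + k) = trajectory step v xs (b + k) := by
    intro k
    rw [trajectory_add, trajectory_add, hpre a le_rfl, hcyc]
    congr 2 with j
    simp only [ys, if_neg (show ¬ a + j < a by omega)]
    congr 1
    omega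
  rw [sum_range_add, sum_range_add, ← sum_range_add_sum_Ico _ hab,
    sum_congr rfl fun k hk => congrArg f (hpre k (mem_range.mp hk).le)]
  simp only [hpost]
  ring

theorem sum_trajectory_le_of_cycle_nonpos [Fintype V] {f : V → ℝ} {v : V}
    (hcyc : ∀ xs a b, a < b → trajectory step v xs a = trajectory step v xs b →
      ∑ k ∈ Ico a b, f (trajectory step v xs k) ≤ 0)
    (xs : ℕ → X) (n : ℕ) :
    ∑ k ∈ range n, f (trajectory step v xs k) ≤ Fintype.card V * ∑ u, |f u| := by
  set D := ∑ u, |f u|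
  have hfD : ∀ u, f u ≤ D := fun u =>
    (le_abs_self _).trans (single_le_sum (fun u _ => abs_nonneg (f u)) (mem_univ u))
  induction n using Nat.strong_induction_on generalizing xs with
  | _ n ih =>
    by_cases hn : n ≤ Fintype.card V
    · calc ∑ k ∈ range n, f (trajectory step v xs k) ≤ n * D := by
            simpa using sum_le_sum fun k (_ : k ∈ range n) => hfD (trajectory step v xs k)
        _ ≤ Fintype.card V * D := by gcongr
    · -- cut out a cycle among the first `|V| + 1` positions
      obtain ⟨x, y, hxy, hxy'⟩ := Fintype.exists_ne_map_eq_of_card_lt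
        (fun k : Fin (Fintype.card V + 1) => trajectory step v xs k) (by simp)
      obtain ⟨a, b, hab, hbn, hcab⟩ : ∃ a b, a < b ∧ b ≤ n ∧
          trajectory step v xs a = trajectory step v xs b := by
        rcases lt_or_gt_of_ne (Fin.val_injective.ne hxy) with h | h
        · exact ⟨x, y, h, by omega, hxy'⟩
        · exact ⟨y, x, h, by omega, hxy'.symm⟩
      obtain ⟨r, rfl⟩ := Nat.exists_eq_add_of_le hbn
      rw [sum_range_trajectory_eq_of_cycle f hab.le hcab]
      linarith [ih (a + r) (by omega) (fun k => if k < a then xs k else xs (k + (b - a))),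
        hcyc xs a b hab hcab]

theorem sum_Ico_trajectory_sub_le_of_periodic {g : V → ℝ} {c : ℝ} {v : V}
    (h : ∀ ys, UltimatelyPeriodic ys → liminfAvg (fun k => g (trajectory step v ys k)) ≤ c)
    {xs : ℕ → X} {a b : ℕ} (hab : a < b)
    (hcyc : trajectory step v xs a = trajectory step v xs b) :
    ∑ k ∈ Ico a b, (g (trajectory step v xs k) - c) ≤ 0 := by
  set T := b - a
  -- `ys` runs through the cycle forever
  set ys : ℕ → X := fun k => xs (if k < a then k else a + (k - a) % T)
  have hys : ∀ k < b, ys k = xs k := by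
    intro k hk
    simp only [ys]
    split_ifs
    · rfl
    · rw [Nat.mod_eq_of_lt (by omega)]; congr 1; omega
  have hysper : ∀ k, a ≤ k → ys (k + T) = ys k := fun k hk => by
    simp only [ys, if_neg (show ¬ k + T < a by omega), if_neg (show ¬ k < a by omega),
      show k + T - a = k - a + T by omega, Nat.add_mod_right]
  have hper : ∀ k, a ≤ k → trajectory step v ys (k + T) = trajectory step v ys k := by
    intro k hk
    induction k, hk using Nat.le_induction with
    | base =>
      rw [show a + T = b by omega, trajectory_congr hys, ← hcyc,
        trajectory_congr fun k hk => (hys k (by omega)).symm]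
    | succ k hk ih => rw [add_right_comm, trajectory, ih, hysper k hk, trajectory]
  have hmean : liminfAvg (fun k => g (trajectory step v ys k)) =
      (∑ k ∈ Ico a (a + T), g (trajectory step v ys k)) / T :=
    (tendsto_avg_of_periodic (by omega) fun k hk => by rw [hper k hk]).liminf_eq
  have hle := hmean ▸ h ys ⟨a, T, by omega, hysper⟩
  rw [div_le_iff₀ (by simp; omega), show a + T = b by omega] at hle
  rw [sum_sub_distrib, sum_const, Nat.card_Ico, nsmul_eq_mul, sub_nonpos,
    ← sum_congr rfl fun k hk => congrArg g (trajectory_congr fun j hj =>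
      hys j (by simp at hk; omega))]
  simpa [mul_comm] using hle

theorem exists_potential [Fintype V] [Nonempty X] (f : V → ℝ) (v : V)
    (hcyc : ∀ xs a b, a < b → trajectory step v xs a = trajectory step v xs b →
      ∑ k ∈ Ico a b, f (trajectory step v xs k) ≤ 0) :
    ∃ (R : Set V) (φ : V → ℝ), v ∈ R ∧
      ∀ u ∈ R, 0 ≤ φ u ∧ ∀ x, step u x ∈ R ∧ f u + φ (step u x) ≤ φ u := by
  -- `φ u` is the largest weight of a finite run from `u`
  set W : V → (ℕ → X) × ℕ → ℝ := fun u p => ∑ k ∈ range p.2, f (trajectory step u p.1 k)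
  refine ⟨Set.range fun p : (ℕ → X) × ℕ => trajectory step v p.1 p.2, fun u => ⨆ p, W u p,
    ⟨(fun _ => Classical.arbitrary X, 0), rfl⟩, ?_⟩
  rintro _ ⟨⟨ys, m⟩, rfl⟩
  -- a run from `trajectory step v ys m` prolongs a run of length `m` from `v`
  have hbdd : ∀ (ys : ℕ → X) (m : ℕ), BddAbove (Set.range (W (trajectory step v ys m))) := by
    intro ys m
    set D := ∑ u, |f u|
    refine ⟨Fintype.card V * D + m * D, ?_⟩
    rintro _ ⟨⟨xs, n⟩, rfl⟩
    set zs : ℕ → X := fun k => if k < m then ys k else xs (k - m)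
    have hzs : ∀ k, trajectory step v zs (m + k) =
        trajectory step (trajectory step v ys m) xs k := by
      intro k
      rw [trajectory_add, trajectory_congr fun j hj => if_pos hj]
      congr 1 with j
      simp [zs]
    have hrun := sum_trajectory_le_of_cycle_nonpos hcyc zs (m + n)
    have hpre : m • (-D) ≤ ∑ k ∈ range m, f (trajectory step v zs k) := by
      simpa using card_nsmul_le_sum (range m) _ (-D) fun k _ =>
        (neg_le_neg (single_le_sum (fun u _ => abs_nonneg (f u)) (mem_univ _))).trans
          (neg_abs_le _)
    rw [sum_range_add] at hrun
    simp only [W, ← hzs]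
    rw [nsmul_eq_mul] at hpre
    linarith
  refine ⟨le_ciSup_of_le (hbdd ys m) (ys, 0) (by simp [W]), fun x => ⟨?_, ?_⟩⟩
  · refine ⟨(update ys m x, m + 1), ?_⟩
    simp only [trajectory, update_self]
    exact congrArg (step · x) (trajectory_congr fun k hk => update_of_ne (by omega) _ _)
  · rw [← le_sub_iff_add_le']
    refine ciSup_le fun ⟨xs, n⟩ => le_sub_iff_add_le'.mpr ?_
    refine le_ciSup_of_le (hbdd ys m) (fun | 0 => x | k + 1 => xs k, n + 1) (le_of_eq ?_)
    simp only [W, sum_range_succ', trajectory_succ']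
    exact add_comm _ _

end Trajectory

section Play

variable {N Ac St : Type} (A : Arena N Ac St)

theorem runAux_snd (σ : ∀ _ : N, Strategy N Ac) (s : St) (n : ℕ) (j : N) :
    (runAux A σ s n).2 j = trajectory (σ j).δ (σ j).q0 (fun k => (play A σ s k).2) n := by
  induction n with
  | zero => rfl
  | succ n ih => rw [trajectory, ← ih]; rfl

theorem play_snd_apply (σ : ∀ _ : N, Strategy N Ac) (s : St) (n : ℕ) (j : N) :
    (play A σ s n).2 j =
      (σ j).act (trajectory (σ j).δ (σ j).q0 (fun k => (play A σ s k).2) n) :=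
  congrArg (σ j).act (runAux_snd A σ s n j)

theorem isPath_play (σ : ∀ _ : N, Strategy N Ac) (s : St) : IsPath A (play A σ s) :=
  fun _ => rfl

variable {A} in
theorem IsPath.fst_eq_of_snd_eq {ρ ρ' : ℕ → St × (N → Ac)} (hρ : IsPath A ρ)
    (hρ' : IsPath A ρ') (h0 : (ρ 0).1 = (ρ' 0).1) {n : ℕ} (h : ∀ k < n, (ρ k).2 = (ρ' k).2) :
    (ρ n).1 = (ρ' n).1 := by
  induction n with
  | zero => exact h0
  | succ n ih => rw [← hρ n, ← hρ' n, ih fun k hk => h k (by omega), h n (by omega)]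

theorem play_eq_of_forall_snd {σ : ∀ _ : N, Strategy N Ac} {s : St} {ρ : ℕ → St × (N → Ac)}
    (hρ : IsPath A ρ) (h0 : (ρ 0).1 = s)
    (hact : ∀ n j, (ρ n).2 j = (σ j).act (trajectory (σ j).δ (σ j).q0 (fun k => (ρ k).2) n)) :
    play A σ s = ρ := by
  have hsnd : ∀ n, (play A σ s n).2 = (ρ n).2 := by
    intro n
    induction n using Nat.strong_induction_on with
    | _ n ih =>
      funext j
      rw [play_snd_apply, hact, trajectory_congr ih]
  funext n
  exact Prod.ext ((isPath_play A σ s).fst_eq_of_snd_eq hρ h0.symm fun k _ => hsnd k) (hsnd n)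

instance [Nonempty Ac] : Nonempty (Strategy N Ac) :=
  ⟨⟨Unit, (), fun _ _ => (), fun _ => Classical.arbitrary Ac⟩⟩

theorem UltimatelyPeriodic.exists_strategy {xs : ℕ → Ac} (hxs : UltimatelyPeriodic xs) :
    ∃ σ : Strategy N Ac, ∀ (H : ℕ → N → Ac) n, σ.act (trajectory σ.δ σ.q0 H n) = xs n := by
  obtain ⟨M, _, m₀, next, lab, hxs⟩ := hxs.exists_iterate_eq
  refine ⟨⟨M, m₀, fun q _ => next q, lab⟩, fun H n => ?_⟩
  change lab (trajectory (fun q _ => next q) m₀ H n) = xs n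
  rw [trajectory_eq_iterate, hxs]

variable [DecidableEq N]

theorem play_update_snd_self (σ : ∀ _ : N, Strategy N Ac) (i : N) (σ' : Strategy N Ac) (s : St)
    (n : ℕ) :
    (play A (update σ i σ') s n).2 i =
      σ'.act (trajectory σ'.δ σ'.q0 (fun k => (play A (update σ i σ') s k).2) n) := by
  rw [play_snd_apply, update_self]

theorem play_update_snd_of_ne (σ : ∀ _ : N, Strategy N Ac) {i j : N} (hj : j ≠ i)
    (σ' : Strategy N Ac) (s : St) (n : ℕ) :
    (play A (update σ i σ') s n).2 j =
      (σ j).act (trajectory (σ j).δ (σ j).q0 (fun k => (play A (update σ i σ') s k).2) n) := by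
  rw [play_snd_apply, update_of_ne hj]

def coalitionStep (i : N) (σ : ∀ _ : N, Strategy N Ac) (v : St × ∀ j, (σ j).Q) (a : Ac) :
    St × ∀ j, (σ j).Q :=
  let b := update (fun j => (σ j).act (v.2 j)) i a
  (A.tr v.1 b, fun j => (σ j).δ (v.2 j) b)

theorem trajectory_coalitionStep_eq (σ : ∀ _ : N, Strategy N Ac) (i : N) (σ' : Strategy N Ac)
    (s : St) (n : ℕ) :
    trajectory (coalitionStep A i σ) (s, fun j => (σ j).q0)
        (fun k => (play A (update σ i σ') s k).2 i) n =
      ((play A (update σ i σ') s n).1,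
        fun j => trajectory (σ j).δ (σ j).q0 (fun k => (play A (update σ i σ') s k).2) n) := by
  set ρ := play A (update σ i σ') s
  induction n with
  | zero => rfl
  | succ n ih =>
    have hb : update (fun j => (σ j).act (trajectory (σ j).δ (σ j).q0 (fun k => (ρ k).2) n)) i
        ((ρ n).2 i) = (ρ n).2 := by
      funext j
      by_cases hj : j = i
      · subst hj; rw [update_self]
      · rw [update_of_ne hj, play_update_snd_of_ne A σ hj]
    rw [trajectory, ih]
    simp only [coalitionStep, hb]
    rfl

end Play

section Punishment

variable {N Ac St : Type} [DecidableEq N] (A : Arena N Ac St)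

def outcomesAgainst (w : St → ℤ) (i : N) (p : St → N → Ac) (s₀ : St) : Set ℝ :=
  {x | ∃ (t : ℕ → St) (m : ℕ), t m = s₀ ∧
    (∀ k, m ≤ k → ∃ a, t (k + 1) = A.tr (t k) (update (p (t k)) i a)) ∧
    liminfAvg (fun k => (w (t k) : ℝ)) = x}

theorem bddBelow_range_weight [Finite St] (w : St → ℤ) (t : ℕ → St) :
    BddBelow (Set.range fun k => (w (t k) : ℝ)) :=
  ((Set.finite_range fun s => (w s : ℝ)).subset (Set.range_comp_subset_range t _)).bddBelow

theorem mem_upperBounds_outcomesAgainst [Finite St] {w : St → ℤ} {i : N} {p : St → N → Ac}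
    {c : ℝ} {G : Set St} {ψ : St → ℝ} {s₀ : St} (hs₀ : s₀ ∈ G)
    (hψ : ∀ s ∈ G, 0 ≤ ψ s ∧ ∀ a, A.tr s (update (p s) i a) ∈ G ∧
      (w s - c) + ψ (A.tr s (update (p s) i a)) ≤ ψ s) :
    c ∈ upperBounds (outcomesAgainst A w i p s₀) := by
  rintro _ ⟨t, m, rfl, ht, rfl⟩
  have hinv : ∀ n, m ≤ n → t n ∈ G ∧ ∑ k ∈ Ico m n, ((w (t k) : ℝ) - c) + ψ (t n) ≤ ψ (t m) := by
    intro n hn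
    induction n, hn using Nat.le_induction with
    | base => simpa using hs₀
    | succ n hn ih =>
      obtain ⟨a, ha⟩ := ht n hn
      obtain ⟨hG, hdec⟩ := (hψ _ ih.1).2 a
      rw [ha, sum_Ico_succ_top hn]
      exact ⟨hG, by linarith [ih.2]⟩
  refine liminfAvg_le_of_eventually_sum_le
    (C := ∑ k ∈ range m, ((w (t k) : ℝ) - c) + ψ (t m)) ?_ ?_
  · exact bddBelow_range_weight w t
  · filter_upwards [eventually_ge_atTop m] with n hn
    obtain ⟨hG, hsum⟩ := hinv n hn
    have hsplit := sum_range_add_sum_Ico (fun k => (w (t k) : ℝ) - c) hn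
    have hcentre : ∑ k ∈ range n, ((w (t k) : ℝ) - c) = ∑ k ∈ range n, (w (t k) : ℝ) - n * c := by
      simp [sum_sub_distrib]
    linarith [(hψ _ hG).1]

theorem exists_positional_of_potential [Finite N] {i : N} {σ : ∀ _ : N, Strategy N Ac}
    {R : Set (St × ∀ j, (σ j).Q)} {f : St → ℝ} {φ : (St × ∀ j, (σ j).Q) → ℝ}
    (hφ : ∀ v ∈ R, 0 ≤ φ v ∧
      ∀ a, coalitionStep A i σ v a ∈ R ∧ f v.1 + φ (coalitionStep A i σ v a) ≤ φ v) :
    ∃ (p : St → N → Ac) (ψ : St → ℝ), ∀ s ∈ Prod.fst '' R, 0 ≤ ψ s ∧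
      ∀ a, A.tr s (update (p s) i a) ∈ Prod.fst '' R ∧
        f s + ψ (A.tr s (update (p s) i a)) ≤ ψ s := by
  -- over each state, remember a reachable configuration of least potential
  have hmin : ∀ s, ∃ q : ∀ j, (σ j).Q, s ∈ Prod.fst '' R →
      (s, q) ∈ R ∧ ∀ q', (s, q') ∈ R → φ (s, q) ≤ φ (s, q') := by
    intro s
    by_cases hs : s ∈ Prod.fst '' R
    · obtain ⟨⟨s, q⟩, hq, rfl⟩ := hs
      obtain ⟨q, hq, hmin⟩ :=
        Set.exists_min_image {q | (s, q) ∈ R} (fun q => φ (s, q)) (Set.toFinite _) ⟨q, hq⟩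
      exact ⟨q, fun _ => ⟨hq, hmin⟩⟩
    · exact ⟨fun j => (σ j).q0, fun h => absurd h hs⟩
  choose q hq using hmin
  refine ⟨fun s j => (σ j).act (q s j), fun s => φ (s, q s), fun s hs => ?_⟩
  obtain ⟨hR, -⟩ := hq s hs
  obtain ⟨hφ0, hstep⟩ := hφ _ hR
  refine ⟨hφ0, fun a => ?_⟩
  obtain ⟨hnext, hdec⟩ := hstep a
  have hs' : (coalitionStep A i σ (s, q s) a).1 ∈ Prod.fst '' R := ⟨_, hnext, rfl⟩
  exact ⟨hs', le_trans (add_le_add le_rfl ((hq _ hs').2 _ hnext)) hdec⟩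

theorem exists_positional_lt [Fintype N] [Fintype St] [Nonempty Ac] (w : N → St → ℤ) (i : N)
    (s₀ : St) {c : ℝ} (hc : pun A w i s₀ < c) :
    ∃ p : St → N → Ac, c ∈ upperBounds (outcomesAgainst A (w i) i p s₀) := by
  obtain ⟨σ, hσ⟩ := exists_lt_of_ciInf_lt hc
  have hbdd : BddAbove (Set.range fun σ' => pay (w i) (play A (update σ i σ') s₀)) := by
    obtain ⟨B, hB⟩ := (Set.finite_range fun s => (w i s : ℝ)).bddAbove
    refine ⟨B, ?_⟩
    rintro _ ⟨σ', rfl⟩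
    exact liminfAvg_le_of_forall_le (bddBelow_range_weight _ _) fun k => hB ⟨_, rfl⟩
  set v₀ : St × ∀ j, (σ j).Q := (s₀, fun j => (σ j).q0)
  have hperiodic : ∀ xs, UltimatelyPeriodic xs →
      liminfAvg (fun k => (w i (trajectory (coalitionStep A i σ) v₀ xs k).1 : ℝ)) ≤ c := by
    intro xs hxs
    obtain ⟨σ', hσ'⟩ := hxs.exists_strategy (N := N)
    have hplay : xs = fun k => (play A (update σ i σ') s₀ k).2 i :=
      funext fun k => by rw [play_update_snd_self, hσ']
    have hpay : liminfAvg (fun k => (w i (trajectory (coalitionStep A i σ) v₀ xs k).1 : ℝ)) =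
        pay (w i) (play A (update σ i σ') s₀) := by
      rw [hplay]
      simp only [v₀, trajectory_coalitionStep_eq]
      rfl
    exact hpay ▸ (le_ciSup hbdd σ').trans hσ.le
  have hcyc : ∀ (xs : ℕ → Ac) (a b : ℕ), a < b →
      trajectory (coalitionStep A i σ) v₀ xs a = trajectory (coalitionStep A i σ) v₀ xs b →
      ∑ k ∈ Ico a b, ((w i (trajectory (coalitionStep A i σ) v₀ xs k).1 : ℝ) - c) ≤ 0 :=
    fun xs a b hab hcyc =>
      sum_Ico_trajectory_sub_le_of_periodic (g := fun v => (w i v.1 : ℝ))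
        (step := coalitionStep A i σ) (v := v₀) hperiodic hab hcyc
  obtain ⟨R, φ, hv₀, hφ⟩ := exists_potential (step := coalitionStep A i σ)
    (fun v => (w i v.1 : ℝ) - c) v₀ hcyc
  obtain ⟨p, ψ, hψ⟩ := exists_positional_of_potential A (f := fun s => (w i s : ℝ) - c) hφ
  exact ⟨p, mem_upperBounds_outcomesAgainst A (G := Prod.fst '' R) ⟨v₀, hv₀, rfl⟩ hψ⟩

theorem exists_mem_upperBounds_of_forall_lt {α : Type*} [Finite α] {S : α → Set ℝ} {x : ℝ}
    (h : ∀ c, x < c → ∃ a, c ∈ upperBounds (S a)) : ∃ a, x ∈ upperBounds (S a) := by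
  by_contra! hne
  simp only [mem_upperBounds, not_forall, not_le] at hne
  choose y hyS hxy using hne
  have : Nonempty α := let ⟨a, _⟩ := h (x + 1) (by linarith); ⟨a⟩
  obtain ⟨a₀, ha₀⟩ := Finite.exists_min y
  obtain ⟨a, ha⟩ := h ((x + y a₀) / 2) (by linarith [hxy a₀])
  linarith [ha (hyS a), ha₀ a, hxy a₀]

theorem exists_positional_punishment [Fintype N] [Fintype Ac] [Nonempty Ac] [Fintype St]
    (w : N → St → ℤ) (i : N) (s₀ : St) :
    ∃ p : St → N → Ac, pun A w i s₀ ∈ upperBounds (outcomesAgainst A (w i) i p s₀) :=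
  exists_mem_upperBounds_of_forall_lt fun _ hc => exists_positional_lt A w i s₀ hc

end Punishment

section Trigger

variable {N Ac St M : Type} (A : Arena N Ac St) (next : M → M) (lab : M → St × (N → Ac))

open Classical in
/-- Memory of the grim-trigger profile: `inl m` follows the path generated by `(next, lab)`; the
first joint action off the path switches to `inr (d, s, s)`, with `d` a deviating player and `s`
the state reached; afterwards the last component tracks the current state. -/
noncomputable def triggerStep : M ⊕ N × St × St → (N → Ac) → M ⊕ N × St × St
  | .inl m, a =>
    if h : a = (lab m).2 then .inl (next m)
    else .inr ((ne_iff.mp h).choose, A.tr (lab m).1 a, A.tr (lab m).1 a)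
  | .inr (d, s₀, s), a => .inr (d, s₀, A.tr s a)

def triggerAct (punish : N → St → St → N → Ac) : M ⊕ N × St × St → N → Ac
  | .inl m => (lab m).2
  | .inr (d, s₀, s) => punish d s₀ s

noncomputable def triggerProfile [Fintype M] [Fintype N] [Fintype St] (m₀ : M)
    (punish : N → St → St → N → Ac) : ∀ _ : N, Strategy N Ac :=
  fun j => ⟨M ⊕ N × St × St, .inl m₀, triggerStep A next lab, fun q => triggerAct lab punish q j⟩

variable {A next lab}

theorem trajectory_triggerStep_inl {m₀ : M} {H : ℕ → N → Ac} {n : ℕ}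
    (h : ∀ k < n, H k = (lab (next^[k] m₀)).2) :
    trajectory (triggerStep A next lab) (.inl m₀) H n = .inl (next^[n] m₀) := by
  induction n with
  | zero => rfl
  | succ n ih =>
    rw [trajectory, ih fun k hk => h k (by omega), iterate_succ_apply']
    simp only [triggerStep, dif_pos (h n (by omega))]

theorem trajectory_triggerStep_inr {q : M ⊕ N × St × St} {H : ℕ → N → Ac} {t : ℕ → St}
    (ht : ∀ k, t (k + 1) = A.tr (t k) (H k)) {d : N} {s₀ : St} {n₁ : ℕ}
    (h₁ : trajectory (triggerStep A next lab) q H n₁ = .inr (d, s₀, t n₁)) :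
    ∀ k, n₁ ≤ k → trajectory (triggerStep A next lab) q H k = .inr (d, s₀, t k) := by
  intro k hk
  induction k, hk using Nat.le_induction with
  | base => exact h₁
  | succ k _ ih => rw [trajectory, ih, ht]; rfl

theorem triggerStep_inl_update [DecidableEq N] {m : M} {i : N} {b : Ac}
    (hne : update (lab m).2 i b ≠ (lab m).2) :
    triggerStep A next lab (.inl m) (update (lab m).2 i b) =
      .inr (i, A.tr (lab m).1 (update (lab m).2 i b), A.tr (lab m).1 (update (lab m).2 i b)) := by
  simp only [triggerStep, dif_neg hne]
  congr
  by_contra hd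
  exact (ne_iff.mp hne).choose_spec (update_of_ne hd _ _)

variable [Fintype M] [Fintype N] [Fintype St] {m₀ : M} {π : ℕ → St × (N → Ac)}

theorem play_triggerProfile (hπ : IsPath A π) (hgen : ∀ n, π n = lab (next^[n] m₀))
    (punish : N → St → St → N → Ac) :
    play A (triggerProfile A next lab m₀ punish) (π 0).1 = π := by
  refine play_eq_of_forall_snd A hπ rfl fun n j => ?_
  change _ = triggerAct lab punish
    (trajectory (triggerStep A next lab) (.inl m₀) (fun k => (π k).2) n) j
  rw [trajectory_triggerStep_inl fun k _ => by rw [hgen], hgen]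
  rfl

theorem play_update_triggerProfile_snd [DecidableEq N] (punish : N → St → St → N → Ac) (i : N)
    (σ' : Strategy N Ac) (s : St) (n : ℕ) :
    (play A (update (triggerProfile A next lab m₀ punish) i σ') s n).2 =
      update (triggerAct lab punish (trajectory (triggerStep A next lab) (.inl m₀)
        (fun k => (play A (update (triggerProfile A next lab m₀ punish) i σ') s k).2) n)) i
        ((play A (update (triggerProfile A next lab m₀ punish) i σ') s n).2 i) := by
  funext j
  by_cases hj : j = i
  · subst hj; rw [update_self]
  · rw [update_of_ne hj, play_update_snd_of_ne A _ hj]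
    rfl

theorem play_update_triggerProfile_punished [DecidableEq N] (hπ : IsPath A π)
    (hgen : ∀ n, π n = lab (next^[n] m₀)) (punish : N → St → St → N → Ac) (i : N)
    (σ' : Strategy N Ac)
    (hdev : ∃ n, (play A (update (triggerProfile A next lab m₀ punish) i σ') (π 0).1 n).2 ≠
      (π n).2) :
    let ρ := play A (update (triggerProfile A next lab m₀ punish) i σ') (π 0).1
    ∃ n₀ a, (ρ (n₀ + 1)).1 = A.tr (π n₀).1 (update (π n₀).2 i a) ∧
      ∀ k, n₀ + 1 ≤ k → ∃ b,
        (ρ (k + 1)).1 = A.tr (ρ k).1 (update (punish i (ρ (n₀ + 1)).1 (ρ k).1) i b) := by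
  intro ρ
  set mem := trajectory (triggerStep A next lab) (.inl m₀) (fun k => (ρ k).2)
  have hρ : ∀ n, (ρ n).2 = update (triggerAct lab punish (mem n)) i ((ρ n).2 i) :=
    play_update_triggerProfile_snd punish i σ' _
  have hpath : ∀ k, A.tr (ρ k).1 (ρ k).2 = (ρ (k + 1)).1 := isPath_play A _ _
  classical
  -- at the first deviation only `i` leaves the path, and the others start punishing `i`
  set n₀ := Nat.find hdev
  have hagree : ∀ k < n₀, (ρ k).2 = (π k).2 := fun k hk => not_not.mp (Nat.find_min hdev hk)
  have hmem : mem n₀ = .inl (next^[n₀] m₀) :=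
    trajectory_triggerStep_inl fun k hk => by rw [hagree k hk, hgen]
  have hact : (ρ n₀).2 = update (π n₀).2 i ((ρ n₀).2 i) := by
    calc (ρ n₀).2 = update (triggerAct lab punish (mem n₀)) i ((ρ n₀).2 i) := hρ n₀
      _ = _ := by rw [hmem, hgen]; rfl
  set s₂ := (ρ (n₀ + 1)).1
  have hs₂ : s₂ = A.tr (π n₀).1 (update (π n₀).2 i ((ρ n₀).2 i)) := by
    rw [← hact, ← (isPath_play A _ _).fst_eq_of_snd_eq hπ rfl hagree]
    exact (hpath n₀).symm
  have hpunishing : mem (n₀ + 1) = .inr (i, s₂, s₂) := by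
    have hne : update (π n₀).2 i ((ρ n₀).2 i) ≠ (π n₀).2 := hact ▸ Nat.find_spec hdev
    change triggerStep A next lab (mem n₀) (ρ n₀).2 = _
    rw [hmem, hact, hs₂, hgen n₀]
    exact triggerStep_inl_update (by rwa [hgen n₀] at hne)
  have hfollow : ∀ k, n₀ + 1 ≤ k → mem k = .inr (i, s₂, (ρ k).1) :=
    trajectory_triggerStep_inr (fun k => (hpath k).symm) hpunishing
  refine ⟨n₀, (ρ n₀).2 i, hs₂, fun k hk => ⟨(ρ k).2 i, ?_⟩⟩
  rw [← hpath k]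
  congr 1
  calc (ρ k).2 = update (triggerAct lab punish (mem k)) i ((ρ k).2 i) := hρ k
    _ = _ := by rw [hfollow k hk]; rfl

theorem pay_play_update_triggerProfile_le [DecidableEq N] {w : N → St → ℤ} (hπ : IsPath A π)
    (hgen : ∀ n, π n = lab (next^[n] m₀)) {punish : N → St → St → N → Ac}
    (hpunish : ∀ i s₀, pun A w i s₀ ∈ upperBounds (outcomesAgainst A (w i) i (punish i s₀) s₀))
    {i : N} {z : ℝ} (hsec : ∀ k, ZSecure A w i z (π k)) (hz : z ≤ pay (w i) π)
    (σ' : Strategy N Ac) :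
    pay (w i) (play A (update (triggerProfile A next lab m₀ punish) i σ') (π 0).1) ≤
      pay (w i) π := by
  set ρ := play A (update (triggerProfile A next lab m₀ punish) i σ') (π 0).1
  by_cases hdev : ∃ n, (ρ n).2 ≠ (π n).2
  · obtain ⟨n₀, a, hs₂, hfollow⟩ := play_update_triggerProfile_punished hπ hgen punish i σ' hdev
    calc pay (w i) ρ ≤ pun A w i (ρ (n₀ + 1)).1 :=
          hpunish i _ ⟨fun k => (ρ k).1, n₀ + 1, rfl, hfollow, rfl⟩
      _ ≤ z := hs₂ ▸ hsec n₀ a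
      _ ≤ pay (w i) π := hz
  · rw [not_exists_not] at hdev
    rw [show ρ = π from funext fun n => Prod.ext
      ((isPath_play A _ _).fst_eq_of_snd_eq hπ rfl fun k _ => hdev k) (hdev n)]

end Trigger

theorem secure_values_implies_nash_general {N Ac St : Type}
    [Fintype N] [DecidableEq N]
    [Fintype Ac] [Nonempty Ac] [Fintype St]
    (A : Arena N Ac St) (w : N → St → ℤ)
    (π : ℕ → St × (N → Ac)) (hπ : IsPath A π) (hup : UltimatelyPeriodic π)
    (h : ∃ z : N → ℝ, ∀ i : N,
        z i ∈ Set.range (pun A w i) ∧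
        (∀ k : ℕ, ZSecure A w i (z i) (π k)) ∧
        z i ≤ pay (w i) π) :
    ∃ σ : ∀ _ : N, Strategy N Ac,
        NashFrom A w σ (π 0).1 ∧ play A σ (π 0).1 = π := by
  obtain ⟨z, hz⟩ := h
  obtain ⟨M, _, m₀, next, lab, hgen⟩ := hup.exists_iterate_eq
  choose punish hpunish using exists_positional_punishment A w
  have hplay := play_triggerProfile hπ hgen punish
  refine ⟨triggerProfile A next lab m₀ punish, fun i σ' => ?_, hplay⟩
  rw [hplay]
  exact pay_play_update_triggerProfile_le hπ hgen hpunish (hz i).2.1 (hz i).2.2 σ'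

/-- **(2) ⟹ (1) of the Nash characterisation.**
For every mean-payoff game and every ultimately periodic path `π`, if there is a vector
`z` with `z i ∈ pun_i(G)` for every player `i` such that, for every player `i`, every
configuration of `π` is `z i`-secure for `i` and `z i ≤ pay_i(π)`, then some Nash
equilibrium `σ` from the initial state of `π` induces `π`. -/
theorem secure_values_implies_nash {N Ac St : Type}
    [Fintype N] [Nonempty N] [DecidableEq N]
    [Fintype Ac] [Nonempty Ac] [Fintype St] [Nonempty St]
    (A : Arena N Ac St) (w : N → St → ℤ)
    (π : ℕ → St × (N → Ac)) (hπ : IsPath A π) (hup : UltimatelyPeriodic π)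
    (h : ∃ z : N → ℝ, ∀ i : N,
        z i ∈ Set.range (pun A w i) ∧
        (∀ k : ℕ, ZSecure A w i (z i) (π k)) ∧
        z i ≤ pay (w i) π) :
    ∃ σ : ∀ _ : N, Strategy N Ac,
        NashFrom A w σ (π 0).1 ∧ play A σ (π 0).1 = π :=
  secure_values_implies_nash_general A w π hπ hup h
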